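/- arXiv:1809.02522 — 2 statements merged into one kernel-verified Lean document; each statement's English description precedes it below -/
import Mathlib

section
/- Every nonempty word over a linearly ordered finite alphabet can be written uniquely as a concatenation w_1 · w_2 · ... · w_r of Lyndon words with w_1 ≥ w_2 ≥ ... ≥ w_r in lexicographic order (the Chen–Fox–Lyndon factorization). -/
/-- A nonempty word `w` over a linearly ordered alphabet is a Lyndon word if
for every factorization `w = p ++ q` into nonempty words, `w < q` in the
lexicographic order on words. -/
def IsLyndon {α : Type*} [LinearOrder α] (w : List α) : Prop :=
  w ≠ [] ∧ ∀ p q : List α, p ≠ [] → q ≠ [] → w = p ++ q → w < q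

namespace CFL

open List

variable {α : Type*} [LinearOrder α]

lemma lt_append_right (l : List α) {t : List α} (h : t ≠ []) : l < l ++ t := by
  show List.Lex _ l (l ++ t)
  induction l with
  | nil => cases t with
    | nil => exact absurd rfl h
    | cons a t => exact List.Lex.nil
  | cons a l ih => exact List.Lex.cons ih

lemma append_lt_append_left_iff (u v w : List α) : u ++ v < u ++ w ↔ v < w := by
  show List.Lex _ _ _ ↔ List.Lex _ _ _
  induction u with
  | nil => rfl
  | cons a u ih => simpa [List.cons_lex_cons_iff] using ih

lemma lex_append_of_not_prefix {u t : List α} (h : List.Lex (· < ·) u t) : ¬ u <+: t →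
    ∀ x y : List α, u ++ x < t ++ y := by
  induction h with
  | nil => intro hp; exact absurd (List.nil_prefix) hp
  | @cons a l₁ l₂ h ih =>
      intro hp x y
      have : ¬ l₁ <+: l₂ := fun hc => hp (List.cons_prefix_cons.mpr ⟨rfl, hc⟩)
      exact List.Lex.cons (ih this x y)
  | @rel a l₁ b l₂ h =>
      intro _ x y
      exact List.Lex.rel h

/-- key: if `u ≠ []`, `u < v` and `v` is Lyndon then `u ++ v < v`. -/
lemma append_lt_of_lt {u v : List α} (hu : u ≠ []) (huv : u < v) (hv : IsLyndon v) :
    u ++ v < v := by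
  by_cases hp : u <+: v
  · obtain ⟨v', rfl⟩ := hp
    have hv' : v' ≠ [] := by rintro rfl; simp at huv
    have := hv.2 u v' hu hv' rfl
    exact (append_lt_append_left_iff u _ v').mpr this
  · simpa using lex_append_of_not_prefix huv hp v []

lemma lyndon_append {u v : List α} (hu : IsLyndon u) (hv : IsLyndon v) (huv : u < v) :
    IsLyndon (u ++ v) := by
  refine ⟨by simp [hu.1], ?_⟩
  intro p q hp hq he
  rcases List.append_eq_append_iff.mp he.symm with ⟨a', ha, hq'⟩ | ⟨c', hc, hq'⟩
  · -- u = p ++ a', q = a' ++ v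
    rcases eq_or_ne a' [] with rfl | ha'
    · simp only [List.nil_append] at hq'
      subst hq'
      exact append_lt_of_lt hu.1 huv hv
    · have hlt : u < a' := hu.2 p a' hp ha' ha
      have hnp : ¬ u <+: a' := by
        intro hpre
        have h1 : a'.length < u.length := by
          have : u.length = p.length + a'.length := by simp [ha]
          have hp' : 0 < p.length := List.length_pos_iff.mpr hp
          omega
        have h2 := hpre.length_le
        omega
      subst hq'
      exact lex_append_of_not_prefix hlt hnp v v
  · -- p = u ++ c', v = c' ++ q
    rcases eq_or_ne c' [] with rfl | hc'
    · simp only [List.nil_append] at hq'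
      subst hq'
      exact append_lt_of_lt hu.1 huv hv
    · have h1 : v < q := hv.2 c' q hc' hq hq'
      exact lt_trans (append_lt_of_lt hu.1 huv hv) h1

/-- decreasing relation used in the statement -/
lemma rel_iff_le (a b : List α) : (b = a ∨ b < a) ↔ b ≤ a := by
  rw [le_iff_lt_or_eq]; tauto

lemma not_chain'_decomp {β : Type*} {r : β → β → Prop} :
    ∀ {f : List β}, ¬ f.Chain' r → ∃ l₁ a b l₂, f = l₁ ++ a :: b :: l₂ ∧ ¬ r a b := by
  intro f hf
  induction f with
  | nil => exact absurd List.isChain_nil hf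
  | cons a t ih =>
      cases t with
      | nil => exact absurd (List.isChain_singleton a) hf
      | cons b t =>
          rw [show (a :: b :: t).Chain' r ↔ _ from List.isChain_cons_cons] at hf
          by_cases h : r a b
          · have : ¬ (b :: t).Chain' r := fun hc => hf ⟨h, hc⟩
            obtain ⟨l₁, x, y, l₂, he, hr⟩ := ih this
            exact ⟨a :: l₁, x, y, l₂, by simp [he], hr⟩
          · exact ⟨[], a, b, t, rfl, h⟩

lemma exists_merge : ∀ n (f : List (List α)), f.length ≤ n → (∀ x ∈ f, IsLyndon x) →
    ∃ g : List (List α), (∀ x ∈ g, IsLyndon x) ∧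
      g.Chain' (fun a b => b = a ∨ b < a) ∧ g.flatten = f.flatten := by
  intro n
  induction n with
  | zero =>
      intro f hf _
      have : f = [] := List.eq_nil_of_length_eq_zero (Nat.le_zero.mp hf)
      subst this
      exact ⟨[], by simp, List.isChain_nil, rfl⟩
  | succ n ih =>
      intro f hf hlyn
      by_cases hc : f.Chain' (fun a b => b = a ∨ b < a)
      · exact ⟨f, hlyn, hc, rfl⟩
      · obtain ⟨l₁, a, b, l₂, rfl, hr⟩ := not_chain'_decomp hc
        have hab : a < b := by
          rw [rel_iff_le] at hr
          exact lt_of_not_ge hr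
        have ha : IsLyndon a := hlyn a (by simp)
        have hb : IsLyndon b := hlyn b (by simp)
        have hlyn' : ∀ x ∈ l₁ ++ (a ++ b) :: l₂, IsLyndon x := by
          intro x hx
          rcases List.mem_append.mp hx with h | h
          · exact hlyn x (by simp [h])
          · rcases List.mem_cons.mp h with rfl | h
            · exact lyndon_append ha hb hab
            · exact hlyn x (by simp [h])
        have hlen : (l₁ ++ (a ++ b) :: l₂).length ≤ n := by
          simp only [List.length_append, List.length_cons] at hf ⊢
          omega
        obtain ⟨g, h1, h2, h3⟩ := ih _ hlen hlyn'
        exact ⟨g, h1, h2, by simpa using h3⟩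


lemma pairwise_of_chain' {f : List (List α)} (h : f.Chain' (fun a b => b = a ∨ b < a)) :
    f.Pairwise (fun a b => b ≤ a) := by
  haveI : IsTrans (List α) (fun a b => b ≤ a) := ⟨fun a b c h1 h2 => le_trans h2 h1⟩
  exact List.isChain_iff_pairwise.mp (h.imp fun a b => (rel_iff_le a b).mp)

/-- In a CFL factorization, every nonempty suffix of the word is `≥` the last factor. -/
lemma last_factor_min : ∀ (f : List (List α)) (a : List α),
    (∀ x ∈ f ++ [a], IsLyndon x) → (f ++ [a]).Chain' (fun a b => b = a ∨ b < a) →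
    ∀ s, s ≠ [] → s <:+ (f ++ [a]).flatten → s = a ∨ a < s := by
  intro f
  induction f with
  | nil =>
      intro a hl _ s hs hsuf
      obtain ⟨p, hp⟩ := hsuf
      simp only [List.nil_append, List.flatten_cons, List.flatten_nil, List.append_nil] at hp
      rcases eq_or_ne p [] with rfl | hp0
      · left; simpa using hp
      · right; exact (hl a (by simp)).2 p s hp0 hs hp.symm
  | cons u f ih =>
      intro a hl hc s hs hsuf
      have hrest : ((u :: f) ++ [a]).flatten = u ++ (f ++ [a]).flatten := by simp
      rw [hrest] at hsuf
      obtain ⟨p, hp⟩ := hsuf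
      have hl' : ∀ x ∈ f ++ [a], IsLyndon x := fun x hx => hl x (by simp [List.mem_append] at hx ⊢; tauto)
      have hc' : (f ++ [a]).Chain' (fun a b => b = a ∨ b < a) := (List.isChain_cons.mp hc).2
      rcases List.append_eq_append_iff.mp hp with ⟨a', ha', hs'⟩ | ⟨c', hc2, hrest'⟩
      · -- u = p ++ a', s = a' ++ rest
        rcases eq_or_ne a' [] with rfl | ha0
        · simp only [List.nil_append] at hs'
          exact ih a hl' hc' s hs ⟨[], by simp [hs']⟩
        · have hau : a ≤ u := by
            have hpw := pairwise_of_chain' hc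
            simp only [List.cons_append, List.pairwise_cons] at hpw
            exact hpw.1 a (by simp)
          have hrne : (f ++ [a]).flatten ≠ [] := by
            intro h0
            have := List.flatten_eq_nil_iff.mp h0 a (by simp)
            exact (hl a (by simp)).1 this
          right
          rcases eq_or_ne p [] with rfl | hp0
          · simp only [List.nil_append] at ha'
            rw [hs', ← ha']
            exact lt_of_le_of_lt hau (lt_append_right u hrne)
          · have h1 : u < a' := (hl u (by simp)).2 p a' hp0 ha0 ha'
            rw [hs']
            exact lt_of_le_of_lt hau (lt_trans h1 (lt_append_right a' hrne))
      · -- rest = c' ++ s, so s is a suffix of rest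
        exact ih a hl' hc' s hs ⟨c', hrest'.symm⟩

lemma fact_unique : ∀ (n : ℕ) (w : List α), w.length ≤ n → ∀ f g : List (List α),
    (∀ x ∈ f, IsLyndon x) → f.Chain' (fun a b => b = a ∨ b < a) → f.flatten = w →
    (∀ x ∈ g, IsLyndon x) → g.Chain' (fun a b => b = a ∨ b < a) → g.flatten = w →
    f = g := by
  intro n
  induction n with
  | zero =>
      intro w hw f g hf _ hfw hg _ hgw
      have hw0 : w = [] := List.eq_nil_of_length_eq_zero (Nat.le_zero.mp hw)
      subst hw0
      have h1 : f = [] := by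
        rcases f with _ | ⟨x, f⟩
        · rfl
        · exact absurd (List.flatten_eq_nil_iff.mp hfw x (by simp)) (hf x (by simp)).1
      have h2 : g = [] := by
        rcases g with _ | ⟨x, g⟩
        · rfl
        · exact absurd (List.flatten_eq_nil_iff.mp hgw x (by simp)) (hg x (by simp)).1
      rw [h1, h2]
  | succ n ih =>
      intro w hw f g hf hcf hfw hg hcg hgw
      rcases eq_or_ne w [] with rfl | hw0
      · exact ih [] (by simp) f g hf hcf hfw hg hcg hgw
      · have hf0 : f ≠ [] := by rintro rfl; exact hw0 hfw.symm
        have hg0 : g ≠ [] := by rintro rfl; exact hw0 hgw.symm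
        obtain ⟨f₁, a, rfl⟩ := f.eq_nil_or_concat.resolve_left hf0
        obtain ⟨g₁, b, rfl⟩ := g.eq_nil_or_concat.resolve_left hg0
        rw [List.concat_eq_append] at *
        have ha : IsLyndon a := hf a (by simp)
        have hb : IsLyndon b := hg b (by simp)
        have hfw' : f₁.flatten ++ a = w := by simpa using hfw
        have hgw' : g₁.flatten ++ b = w := by simpa using hgw
        have hab : a = b := by
          have h1 : a = b ∨ b < a := last_factor_min g₁ b hg hcg a ha.1
            (by rw [hgw, ← hfw']; exact ⟨f₁.flatten, rfl⟩)
          have h2 : b = a ∨ a < b := last_factor_min f₁ a hf hcf b hb.1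
            (by rw [hfw, ← hgw']; exact ⟨g₁.flatten, rfl⟩)
          rcases h1 with h1 | h1
          · exact h1
          · rcases h2 with h2 | h2
            · exact h2.symm
            · exact absurd (lt_trans h1 h2) (lt_irrefl b)
        subst hab
        have hcancel : f₁.flatten = g₁.flatten := by
          have := hfw'.trans hgw'.symm
          exact List.append_cancel_right this
        have hlen : f₁.flatten.length ≤ n := by
          have h1 : w.length = f₁.flatten.length + a.length := by
            rw [← hfw']; simp
          have h2 : 0 < a.length := List.length_pos_iff.mpr ha.1
          omega
        have heq : f₁ = g₁ := by
          refine ih f₁.flatten hlen f₁ g₁ ?_ ?_ rfl ?_ ?_ hcancel.symm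
          · exact fun x hx => hf x (by simp [hx])
          · exact (List.isChain_append.mp hcf).1
          · exact fun x hx => hg x (by simp [hx])
          · exact (List.isChain_append.mp hcg).1
        simp [heq]

lemma flatten_map_singleton (w : List α) : (w.map fun c => [c]).flatten = w := by
  induction w with
  | nil => rfl
  | cons a w ih => simp [ih]

lemma singleton_lyndon (c : α) : IsLyndon [c] := by
  refine ⟨by simp, ?_⟩
  intro p q hp hq he
  have := congrArg List.length he
  simp at this
  have h1 : 0 < p.length := List.length_pos_iff.mpr hp
  have h2 : 0 < q.length := List.length_pos_iff.mpr hq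
  omega

end CFL

/-- Chen–Fox–Lyndon: every nonempty word over a linearly ordered
finite alphabet factors uniquely as a concatenation of a weakly decreasing
(in lexicographic order) list of Lyndon words. -/
theorem chen_fox_lyndon {α : Type*} [LinearOrder α] [Fintype α]
    (w : List α) (hw : w ≠ []) :
    ∃! f : List (List α),
      (∀ x ∈ f, IsLyndon x) ∧ f.Chain' (fun a b => b = a ∨ b < a) ∧ f.flatten = w := by
  obtain ⟨g, h1, h2, h3⟩ := CFL.exists_merge (w.map fun c => [c]).length
    (w.map fun c => [c]) le_rfl (by rintro x hx; obtain ⟨c, _, rfl⟩ := List.mem_map.mp hx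
                                    exact CFL.singleton_lyndon c)
  rw [CFL.flatten_map_singleton] at h3
  refine ⟨g, ⟨h1, h2, h3⟩, ?_⟩
  rintro y ⟨hy1, hy2, hy3⟩
  exact CFL.fact_unique w.length w le_rfl y g hy1 hy2 hy3 h1 h2 h3
end

section
/- The map f : ℂ³ → ℂ^{2×2}, (x_1, x_2, a) ↦ [[x_1², x_1x_2],[a, x_2²]], has image whose Zariski closure in ℙ³ (after projectivizing) is the hypersurface cut out by the single quadric T_{11}T_{22} − T_{12}², i.e. a cone over the conic (Veronese curve) with vertex [0:0:1:0]. -/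
/-- the image of the map ℂ³ → ℂ^{2×2},
(x₁, x₂, a) ↦ [[x₁², x₁x₂], [a, x₂²]], is Zariski closed: it equals (and hence
its Zariski closure in ℙ³ after projectivizing is) the hypersurface cut out by
the single quadric T₁₁T₂₂ − T₁₂², a cone over the Veronese conic. -/
theorem rough_veronese_222 :
    {y : Fin 2 → Fin 2 → ℂ |
        ∃ x₁ x₂ a : ℂ, y = ![![x₁ ^ 2, x₁ * x₂], ![a, x₂ ^ 2]]} =
      {y : Fin 2 → Fin 2 → ℂ | y 0 0 * y 1 1 - (y 0 1) ^ 2 = 0} := by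
  ext y
  simp only [Set.mem_setOf_eq]
  constructor
  · rintro ⟨x₁, x₂, a, rfl⟩
    simp [Matrix.cons_val_zero, Matrix.cons_val_one]
    ring
  · intro h
    have key : ∃ x₁ x₂ : ℂ, y 0 0 = x₁ ^ 2 ∧ y 0 1 = x₁ * x₂ ∧ y 1 1 = x₂ ^ 2 := by
      by_cases h0 : y 0 0 = 0
      · have h01 : y 0 1 = 0 := by
          have : (y 0 1) ^ 2 = 0 := by rw [h0] at h; linear_combination -h
          exact pow_eq_zero_iff (n := 2) two_ne_zero |>.mp this
        obtain ⟨x₂, hx₂⟩ := IsAlgClosed.exists_pow_nat_eq (y 1 1) two_pos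
        exact ⟨0, x₂, by simp [h0], by simp [h01], hx₂.symm⟩
      · obtain ⟨x₁, hx₁⟩ := IsAlgClosed.exists_pow_nat_eq (y 0 0) two_pos
        have hx₁0 : x₁ ≠ 0 := by rintro rfl; simp at hx₁; exact h0 hx₁.symm
        refine ⟨x₁, y 0 1 / x₁, hx₁.symm, by field_simp, ?_⟩
        have : y 1 1 = (y 0 1) ^ 2 / y 0 0 := by
          field_simp; linear_combination h
        rw [this, ← hx₁]
        field_simp
    obtain ⟨x₁, x₂, h1, h2, h3⟩ := key
    refine ⟨x₁, x₂, y 1 0, ?_⟩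
    funext i; fin_cases i <;> funext j <;> fin_cases j <;> simp [h1, h2, h3]
end
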